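/- arXiv:2410.10767 — 3 statements merged into one kernel-verified Lean document; each statement's English description precedes it below -/
import Mathlib

section
/- Let A ∈ ℝ^{m×n} with A ≥ 0, b ≥ 0 and define I_0, J_0, J as above. Let (Â, b̂, ĉ) be obtained by deleting rows in I_0 and columns in J_0 ∪ J. If ŵ is an unboundedness certificate for (P̂) (Âŵ ≤ 0, ŵ ≥ 0, ĉ^T ŵ > 0), then the vector w* obtained from ŵ by inserting zeros at indices in J_0 ∪ J is an unboundedness certificate for (P): Aw* ≤ 0, w* ≥ 0, c^T w* > 0. -/
open Matrix

open Classical in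
theorem restricted_unboundedness_certificate_extends {m n : ℕ}
    (A : Matrix (Fin m) (Fin n) ℝ) (b : Fin m → ℝ) (c : Fin n → ℝ)
    (hA : ∀ i j, 0 ≤ A i j) (hb : 0 ≤ b)
    (I0 : Fin m → Prop) (hI0 : ∀ i, I0 i ↔ b i = 0)
    (Jbad : Fin n → Prop)
    (hJbad : ∀ j, Jbad j ↔ ((∃ i, I0 i ∧ 0 < A i j) ∨ c j ≤ 0))
    (wh : {j : Fin n // ¬ Jbad j} → ℝ)
    (hwA : (Matrix.of fun (i : {i : Fin m // ¬ I0 i}) (j : {j : Fin n // ¬ Jbad j}) =>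
        A i.1 j.1).mulVec wh ≤ 0)
    (hw0 : 0 ≤ wh)
    (hwc : 0 < (fun j : {j : Fin n // ¬ Jbad j} => c j.1) ⬝ᵥ wh) :
    let w : Fin n → ℝ := fun j => if h : ¬ Jbad j then wh ⟨j, h⟩ else 0
    A.mulVec w ≤ 0 ∧ 0 ≤ w ∧ 0 < c ⬝ᵥ w := by
  intro w
  have key : ∀ g : Fin n → ℝ, g ⬝ᵥ w = ∑ j : {j : Fin n // ¬ Jbad j}, g j.1 * wh j := by
    intro g
    rw [dotProduct]
    calc ∑ j, g j * w j
        = ∑ j ∈ Finset.univ.filter (fun j => ¬ Jbad j), g j * w j := by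
          refine (Finset.sum_filter_of_ne ?_).symm
          intro j _ hne
          by_contra hc
          simp [w, hc] at hne
      _ = ∑ j : {j : Fin n // ¬ Jbad j}, g j.1 * w j.1 :=
          Finset.sum_subtype _ (by simp) _
      _ = ∑ j : {j : Fin n // ¬ Jbad j}, g j.1 * wh j := by
          refine Finset.sum_congr rfl fun j _ => ?_
          simp [w, j.2]
  refine ⟨?_, ?_, ?_⟩
  · intro i
    simp only [Pi.zero_apply]
    rw [mulVec, key (fun j => A i j)]
    by_cases hi : I0 i
    · have : ∀ j : {j : Fin n // ¬ Jbad j}, A i j.1 = 0 := by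
        intro j
        rcases lt_or_eq_of_le (hA i j.1) with h | h
        · exact absurd ((hJbad j.1).mpr (Or.inl ⟨i, hi, h⟩)) j.2
        · exact h.symm
      simp [this]
    · have := hwA ⟨i, hi⟩
      simpa [mulVec, dotProduct] using this
  · intro j
    by_cases h : Jbad j
    · simp [w, h]
    · simpa [w, h] using hw0 ⟨j, h⟩
  · rw [key c]
    simpa [dotProduct] using hwc
end

section
/- Let A ∈ ℝ^{m×n}, b > 0, c > 0. Consider Dantzig's skew-symmetric game matrix S = [[0, A, −b], [−A^T, 0, c], [b^T, −c^T, 0]] of size (m+n+1)×(m+n+1). Let (p*, q*, t*) be a maximin strategy: S^T (p*,q*,t*) ≥ 0 componentwise (equivalently Aq* − bt* ≤ 0, −A^T p* + ct* ≤ 0, b^T p* − c^T q* ≤ 0), with p*, q*, t* ≥ 0, 1^T p* + 1^T q* + t* = 1, and t*(b^T p* − c^T q*) = 0. If t* > 0, then ((1/t*) q*, (1/t*) p*) is an optimal primal-dual pair for (P): max c^T x s.t. Ax ≤ b, x ≥ 0 and (D): min b^T y s.t. A^T y ≥ c, y ≥ 0. -/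
open Matrix

theorem dantzig_positive_t_optimal_pair {m n : ℕ}
    (A : Matrix (Fin m) (Fin n) ℝ) (b : Fin m → ℝ) (c : Fin n → ℝ)
    (hb : ∀ i, 0 < b i) (hc : ∀ j, 0 < c j)
    (p : Fin m → ℝ) (q : Fin n → ℝ) (t : ℝ)
    (h1 : A.mulVec q - t • b ≤ 0)
    (h2 : -Aᵀ.mulVec p + t • c ≤ 0)
    (h3 : b ⬝ᵥ p - c ⬝ᵥ q ≤ 0)
    (hp0 : 0 ≤ p) (hq0 : 0 ≤ q) (ht0 : 0 ≤ t)
    (hsum : (1 : Fin m → ℝ) ⬝ᵥ p + (1 : Fin n → ℝ) ⬝ᵥ q + t = 1)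
    (hcomp : t * (b ⬝ᵥ p - c ⬝ᵥ q) = 0)
    (ht : 0 < t) :
    A.mulVec (t⁻¹ • q) ≤ b ∧ 0 ≤ t⁻¹ • q ∧
    c ≤ Aᵀ.mulVec (t⁻¹ • p) ∧ 0 ≤ t⁻¹ • p ∧
    c ⬝ᵥ (t⁻¹ • q) = b ⬝ᵥ (t⁻¹ • p) := by
  have heq : b ⬝ᵥ p = c ⬝ᵥ q := by
    have := mul_eq_zero.mp hcomp
    rcases this with h | h
    · exact absurd h ht.ne'
    · linarith
  refine ⟨?_, ?_, ?_, ?_, ?_⟩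
  · intro i
    have := h1 i
    simp only [Pi.sub_apply, Pi.smul_apply, Pi.zero_apply, smul_eq_mul] at this
    rw [mulVec_smul]
    simp only [Pi.smul_apply, smul_eq_mul]
    rw [inv_mul_le_iff₀ ht]
    linarith [this]
  · intro j
    simp only [Pi.smul_apply, smul_eq_mul, Pi.zero_apply]
    exact mul_nonneg (inv_nonneg.mpr ht0) (hq0 j)
  · intro j
    have := h2 j
    simp only [Pi.add_apply, Pi.neg_apply, Pi.smul_apply, Pi.zero_apply, smul_eq_mul] at this
    rw [mulVec_smul]
    simp only [Pi.smul_apply, smul_eq_mul]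
    rw [le_inv_mul_iff₀ ht]
    linarith [this]
  · intro i
    simp only [Pi.smul_apply, smul_eq_mul, Pi.zero_apply]
    exact mul_nonneg (inv_nonneg.mpr ht0) (hp0 i)
  · rw [dotProduct_smul, dotProduct_smul, heq]
end

section
/- Let A ∈ ℝ^{m×n}, b > 0, c > 0, and let (p*, q*, t*) satisfy: Aq* − bt* ≤ 0, −A^T p* + ct* ≤ 0, b^T p* − c^T q* ≤ 0, p* ≥ 0, q* ≥ 0, t* ≥ 0, and 1^T p* + 1^T q* + t* = 1. If t* = 0, then q* ≠ 0, c^T q* > 0, Aq* ≤ 0, and hence q* is an unboundedness certificate for (P): max c^T x s.t. Ax ≤ b, x ≥ 0. -/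
open Matrix

theorem dantzig_zero_t_unboundedness {m n : ℕ}
    (A : Matrix (Fin m) (Fin n) ℝ) (b : Fin m → ℝ) (c : Fin n → ℝ)
    (hb : ∀ i, 0 < b i) (hc : ∀ j, 0 < c j)
    (p : Fin m → ℝ) (q : Fin n → ℝ) (t : ℝ)
    (h1 : A.mulVec q - t • b ≤ 0)
    (h2 : -Aᵀ.mulVec p + t • c ≤ 0)
    (h3 : b ⬝ᵥ p - c ⬝ᵥ q ≤ 0)
    (hp0 : 0 ≤ p) (hq0 : 0 ≤ q) (ht0 : 0 ≤ t)
    (hsum : (1 : Fin m → ℝ) ⬝ᵥ p + (1 : Fin n → ℝ) ⬝ᵥ q + t = 1)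
    (ht : t = 0) :
    q ≠ 0 ∧ 0 < c ⬝ᵥ q ∧ A.mulVec q ≤ 0 ∧ 0 ≤ q := by
  subst ht
  have hAq : A.mulVec q ≤ 0 := by
    intro i
    have := h1 i
    simpa using this
  have hbp : 0 ≤ b ⬝ᵥ p := by
    apply Finset.sum_nonneg
    intro i _
    exact mul_nonneg (hb i).le (hp0 i)
  have hcq : 0 < c ⬝ᵥ q := by
    by_contra hle
    push_neg at hle
    have hterms : ∀ j ∈ Finset.univ, (0:ℝ) ≤ c j * q j := fun j _ =>
      mul_nonneg (hc j).le (hq0 j)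
    have hcq0 : c ⬝ᵥ q = 0 :=
      le_antisymm hle (Finset.sum_nonneg hterms)
    have hq : q = 0 := by
      funext j
      have hz := (Finset.sum_eq_zero_iff_of_nonneg hterms).mp hcq0 j (Finset.mem_univ j)
      have := (mul_eq_zero.mp hz).resolve_left (hc j).ne'
      simpa using this
    have hbp0 : b ⬝ᵥ p = 0 := by
      have : b ⬝ᵥ p ≤ 0 := by
        have := h3
        rw [hcq0] at this
        linarith
      linarith
    have hptermz : ∀ i ∈ Finset.univ, (0:ℝ) ≤ b i * p i := fun i _ =>
      mul_nonneg (hb i).le (hp0 i)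
    have hp : p = 0 := by
      funext i
      have hz := (Finset.sum_eq_zero_iff_of_nonneg hptermz).mp hbp0 i (Finset.mem_univ i)
      have := (mul_eq_zero.mp hz).resolve_left (hb i).ne'
      simpa using this
    rw [hp, hq] at hsum
    simp [dotProduct] at hsum
  refine ⟨?_, hcq, hAq, hq0⟩
  intro hq
  rw [hq] at hcq
  simp at hcq
end
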